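/- arXiv:2304.07820 — 6 statements merged into one kernel-verified Lean document; each statement's English description precedes it below -/
import Mathlib

section
/- Let F = GF(q), R = F[x_1,...,x_n], L the ideal of field equations, and J ⊆ R an ideal. Then J + L is a radical ideal of R. -/
open MvPolynomial

theorem IsNilpotent.eq_zero_of_pow_eq_self {M : Type*} [MonoidWithZero M] {a : M} {q : ℕ}
    (hq : 1 < q) (ha : a ^ q = a) (hnil : IsNilpotent a) : a = 0 := by
  obtain ⟨m, hm⟩ := hnil
  have pow_pow_eq_self : ∀ t : ℕ, a ^ q ^ t = a := by
    intro t
    induction t with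
    | zero => rw [pow_zero, pow_one]
    | succ t ih => rw [_root_.pow_succ, pow_mul, ih, ha]
  rw [← pow_pow_eq_self m]
  exact pow_eq_zero_of_le (Nat.lt_pow_self hq).le hm

theorem Ideal.isRadical_of_forall_pow_sub_mem {R : Type*} [CommRing R] {I : Ideal R} {q : ℕ}
    (hq : 1 < q) (h : ∀ x, x ^ q - x ∈ I) : I.IsRadical := by
  rw [Ideal.isRadical_iff_quotient_reduced]
  refine ⟨fun y hy => ?_⟩
  obtain ⟨x, rfl⟩ := Ideal.Quotient.mk_surjective y
  refine hy.eq_zero_of_pow_eq_self hq ?_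
  rw [← map_pow, Ideal.Quotient.mk_eq_mk_iff_sub_mem]
  exact h x

/-- The `#K`-th power map is a `K`-algebra endomorphism, so it suffices to check that it fixes
each `X i` modulo the field equations. -/
theorem MvPolynomial.pow_card_sub_self_mem_span {K σ : Type*} [Field K] [Fintype K]
    (f : MvPolynomial σ K) :
    f ^ Fintype.card K - f ∈
      Ideal.span (Set.range fun i : σ => (X i : MvPolynomial σ K) ^ Fintype.card K - X i) := by
  set I := Ideal.span (Set.range fun i : σ => (X i : MvPolynomial σ K) ^ Fintype.card K - X i)
  have frobenius_eq_id : (Ideal.Quotient.mkₐ K I).comp (FiniteField.frobeniusAlgHom K _) =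
      Ideal.Quotient.mkₐ K I := by
    refine MvPolynomial.algHom_ext fun i => ?_
    rw [AlgHom.comp_apply, FiniteField.frobeniusAlgHom_apply, Ideal.Quotient.mkₐ_eq_mk,
      Ideal.Quotient.mk_eq_mk_iff_sub_mem]
    exact Ideal.subset_span ⟨i, rfl⟩
  rw [← Ideal.Quotient.mk_eq_mk_iff_sub_mem, ← Ideal.Quotient.mkₐ_eq_mk K,
    ← FiniteField.frobeniusAlgHom_apply K, ← AlgHom.comp_apply, frobenius_eq_id]

/-- For `F = GF(q)`, any ideal `J ⊆ F[x₁,…,xₙ]` and the field-equation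
ideal `L`, the ideal `J + L` is radical. -/
theorem stmt2 (F : Type) [Field F] [Fintype F] (q : ℕ) (hq : Fintype.card F = q)
    (n : ℕ) (J L : Ideal (MvPolynomial (Fin n) F))
    (hL : L = Ideal.span (Set.range fun i : Fin n => (X i : MvPolynomial (Fin n) F) ^ q - X i)) :
    (J ⊔ L).IsRadical := by
  subst hq hL
  exact Ideal.isRadical_of_forall_pow_sub_mem Fintype.one_lt_card
    fun f => Ideal.mem_sup_right (pow_card_sub_self_mem_span f)
end

section
/- Let F = GF(q), R = F[x_1,...,x_n], L the field equation ideal, and J an ideal with exactly one F-rational solution (a_1,...,a_n). Then J + L = ⟨x_1 - a_1, ..., x_n - a_n⟩. -/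
/-!
By the combinatorial Nullstellensatz, a polynomial over `F = GF(q)` vanishing on all of `F^n`
lies in the ideal `L` of field equations, since `X_i^q - X_i = ∏_{c ∈ F} (X_i - c)`. Now let `f`
vanish on `V_F(I)`. For each `b ∉ V_F(I)` pick `g_b ∈ I` with `g_b(b) = 1`; then
`P = ∏_b (1 - g_b)` is `1` modulo `I` and `f P` vanishes on all of `F^n`, so
`f = f (1 - P) + f P ∈ I + L`. Hence `I + L` is the vanishing ideal of `V_F(I)`, which for
`V_F(J) = {a}` is `⟨x_1 - a_1, …, x_n - a_n⟩`.
-/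

open MvPolynomial

theorem FiniteField.prod_X_sub_C_eq_X_pow_card_sub_X (F : Type*) [Field F] [Fintype F] :
    ∏ c : F, (Polynomial.X - Polynomial.C c) = Polynomial.X ^ Fintype.card F - Polynomial.X := by
  have hmonic : (Polynomial.X ^ Fintype.card F - Polynomial.X : Polynomial F).Monic :=
    Polynomial.monic_X_pow_sub (by simpa using Fintype.one_lt_card)
  have := Polynomial.prod_multiset_X_sub_C_of_monic_of_roots_card_eq hmonic (by
    rw [FiniteField.roots_X_pow_card_sub_X,
      FiniteField.X_pow_card_sub_X_natDegree_eq F Fintype.one_lt_card]; rfl)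
  rwa [FiniteField.roots_X_pow_card_sub_X] at this

namespace MvPolynomial

section CombinatorialNullstellensatz

variable {R : Type*} [CommRing R] [IsDomain R] {σ : Type*} [Finite σ]

theorem mem_span_prod_X_sub_C_of_eval_eq_zero (S : σ → Finset R) (hS : ∀ i, (S i).Nonempty)
    {f : MvPolynomial σ R} (hf : ∀ x : σ → R, (∀ i, x i ∈ S i) → eval x f = 0) :
    f ∈ Ideal.span (Set.range fun i => ∏ r ∈ S i, (X i - C r)) := by
  obtain ⟨h, -, rfl⟩ := combinatorial_nullstellensatz_exists_linearCombination S hS f hf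
  rw [Ideal.span, ← Finsupp.range_linearCombination]
  exact LinearMap.mem_range_self _ h

theorem span_X_sub_C_eq_vanishingIdeal {k : Type*} [Field k] (b : σ → k) :
    Ideal.span (Set.range fun i => X i - C (b i)) = vanishingIdeal k {b} := by
  refine le_antisymm (Ideal.span_le.2 ?_) fun f hf => ?_
  · rintro _ ⟨i, rfl⟩
    simp
  · have hfb : ∀ x : σ → k, (∀ i, x i ∈ ({b i} : Finset k)) → eval x f = 0 := fun x hx => by
      obtain rfl : x = b := _root_.funext fun i => Finset.mem_singleton.1 (hx i)
      exact (mem_vanishingIdeal_singleton_iff _ _).1 hf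
    simpa using mem_span_prod_X_sub_C_of_eval_eq_zero _ (fun _ => Finset.singleton_nonempty _) hfb

end CombinatorialNullstellensatz

theorem exists_mem_eval_eq_one_of_notMem_zeroLocus {k : Type*} [Field k] {σ : Type*}
    {I : Ideal (MvPolynomial σ k)} {x : σ → k} (hx : x ∉ zeroLocus k I) :
    ∃ g ∈ I, eval x g = 1 := by
  obtain ⟨p, hpI, hpx⟩ : ∃ p ∈ I, eval x p ≠ 0 := by simpa [zeroLocus] using hx
  exact ⟨C (eval x p)⁻¹ * p, I.mul_mem_left _ hpI, by simp [hpx]⟩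

variable (σ : Type*) (F : Type*) [Field F] [Fintype F]

noncomputable def fieldEquations : Ideal (MvPolynomial σ F) :=
  Ideal.span (Set.range fun i => X i ^ Fintype.card F - X i)

variable {σ F}

theorem prod_X_sub_C_eq_X_pow_card_sub_X (i : σ) :
    ∏ c : F, (X i - C c : MvPolynomial σ F) = X i ^ Fintype.card F - X i := by
  simpa using congrArg (Polynomial.aeval (X i : MvPolynomial σ F))
    (FiniteField.prod_X_sub_C_eq_X_pow_card_sub_X F)

theorem mem_fieldEquations_of_eval_eq_zero [Finite σ] {f : MvPolynomial σ F}
    (hf : ∀ x, eval x f = 0) : f ∈ fieldEquations σ F := by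
  simpa [fieldEquations, prod_X_sub_C_eq_X_pow_card_sub_X] using
    mem_span_prod_X_sub_C_of_eval_eq_zero (fun _ => Finset.univ) (fun _ => Finset.univ_nonempty)
      fun x _ => hf x

theorem fieldEquations_le_vanishingIdeal (V : Set (σ → F)) :
    fieldEquations σ F ≤ vanishingIdeal F V := by
  rw [fieldEquations, Ideal.span_le]
  rintro _ ⟨i, rfl⟩ x -
  simp [FiniteField.pow_card]

theorem sup_fieldEquations_eq_vanishingIdeal_zeroLocus [Finite σ] (I : Ideal (MvPolynomial σ F)) :
    I ⊔ fieldEquations σ F = vanishingIdeal F (zeroLocus F I) := by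
  refine le_antisymm
    (sup_le (le_vanishingIdeal_zeroLocus I) (fieldEquations_le_vanishingIdeal _)) fun f hf => ?_
  classical
  have := Fintype.ofFinite σ
  choose! g hgI hg using fun x (hx : x ∉ zeroLocus F I) =>
    exists_mem_eval_eq_one_of_notMem_zeroLocus hx
  set P := ∏ x with x ∉ zeroLocus F I, (1 - g x)
  have hPI : 1 - P ∈ I := by
    rw [← Ideal.Quotient.eq_zero_iff_mem, map_sub, map_one, map_prod, sub_eq_zero, eq_comm]
    refine Finset.prod_eq_one fun x hx => ?_
    rw [map_sub, map_one, Ideal.Quotient.eq_zero_iff_mem.2 (hgI x (by simpa using hx)), sub_zero]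
  have hfP : f * P ∈ fieldEquations σ F := mem_fieldEquations_of_eval_eq_zero fun x => by
    by_cases hx : x ∈ zeroLocus F I
    · rw [map_mul, show eval x f = 0 from hf x hx, zero_mul]
    · rw [map_mul, map_prod, Finset.prod_eq_zero (by simpa using hx) (by simp [hg x hx]), mul_zero]
  rw [show f = f * (1 - P) + f * P by ring]
  exact Ideal.add_mem _ (Ideal.mem_sup_left (I.mul_mem_left f hPI)) (Ideal.mem_sup_right hfP)

end MvPolynomial

/-- If `V_F(J) = {(a₁,…,aₙ)}` is a singleton, then
`J + L = ⟨x₁ - a₁, …, xₙ - aₙ⟩`, where `L` is the field-equation ideal. -/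
theorem stmt3 (F : Type) [Field F] [Fintype F] (q : ℕ) (hq : Fintype.card F = q)
    (n : ℕ) (J L : Ideal (MvPolynomial (Fin n) F))
    (hL : L = Ideal.span (Set.range fun i : Fin n => (X i : MvPolynomial (Fin n) F) ^ q - X i))
    (a : Fin n → F)
    (hV : {b : Fin n → F | ∀ f ∈ J, (eval b) f = 0} = {a}) :
    J ⊔ L = Ideal.span (Set.range fun i : Fin n => (X i : MvPolynomial (Fin n) F) - C (a i)) := by
  subst hq hL
  have hJ : zeroLocus F J = {a} := hV
  rw [span_X_sub_C_eq_vanishingIdeal, ← hJ]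
  exact sup_fieldEquations_eq_vanishingIdeal_zeroLocus J
end

section
/- Let F = GF(q), R = F[x_1,...,x_n], L the field equation ideal, and J an ideal such that V_F(J) is empty. Then J + L = R, i.e., 1 ∈ J + L. -/
open MvPolynomial

/-- If `V_F(J) = ∅`, then `J + L = R`, i.e. `1 ∈ J + L`, where `L`
is the field-equation ideal. -/
theorem stmt4 (F : Type) [Field F] [Fintype F] (q : ℕ) (hq : Fintype.card F = q)
    (n : ℕ) (J L : Ideal (MvPolynomial (Fin n) F))
    (hL : L = Ideal.span (Set.range fun i : Fin n => (X i : MvPolynomial (Fin n) F) ^ q - X i))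
    (hV : {b : Fin n → F | ∀ f ∈ J, (eval b) f = 0} = ∅) :
    J ⊔ L = ⊤ := by
  classical
  by_contra h
  obtain ⟨m, hm, hle⟩ := Ideal.exists_le_maximal _ h
  haveI := hm
  set K := MvPolynomial (Fin n) F ⧸ m with hK
  haveI : Nontrivial K := Ideal.Quotient.nontrivial_iff.mpr hm.ne_top
  let φ : MvPolynomial (Fin n) F →+* K := Ideal.Quotient.mk m
  let ψ : F →+* K := φ.comp (C : F →+* MvPolynomial (Fin n) F)
  have hψinj : Function.Injective ψ := ψ.injective
  have hq2 : 2 ≤ q := hq ▸ Fintype.one_lt_card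
  -- every φ (X i) is a root of X^q - X
  have hroot : ∀ i : Fin n, (φ (X i)) ^ q = φ (X i) := by
    intro i
    have hmem : (X i : MvPolynomial (Fin n) F) ^ q - X i ∈ m := by
      apply hle
      refine le_sup_right (α := Ideal (MvPolynomial (Fin n) F)) ?_
      rw [hL]
      exact Ideal.subset_span ⟨i, rfl⟩
    have : φ ((X i : MvPolynomial (Fin n) F) ^ q - X i) = 0 :=
      (Ideal.Quotient.eq_zero_iff_mem).2 hmem
    rw [map_sub, map_pow, sub_eq_zero] at this
    exact this
  -- the polynomial X^q - X over K
  set P : Polynomial K := Polynomial.X ^ q - Polynomial.X with hP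
  have hPdeg : P.natDegree = q := by
    rw [hP]
    rw [Polynomial.natDegree_sub_eq_left_of_natDegree_lt]
    · exact Polynomial.natDegree_X_pow q
    · rw [Polynomial.natDegree_X, Polynomial.natDegree_X_pow]; omega
  have hPne : P ≠ 0 := fun hc => by
    rw [hc, Polynomial.natDegree_zero] at hPdeg; omega
  set S : Finset K := P.roots.toFinset with hS
  have hScard : S.card ≤ q := by
    calc S.card ≤ Multiset.card P.roots := P.roots.toFinset_card_le
    _ ≤ P.natDegree := Polynomial.card_roots' P
    _ = q := hPdeg
  set T : Finset K := Finset.univ.image ψ with hT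
  have hTcard : T.card = q := by
    rw [hT, Finset.card_image_of_injective _ hψinj, Finset.card_univ, hq]
  have hTS : T ⊆ S := by
    intro x hx
    rw [hT, Finset.mem_image] at hx
    obtain ⟨a, -, rfl⟩ := hx
    rw [hS, Multiset.mem_toFinset, Polynomial.mem_roots hPne]
    simp only [hP, Polynomial.IsRoot, Polynomial.eval_sub, Polynomial.eval_pow,
      Polynomial.eval_X, ← map_pow, ← hq, FiniteField.pow_card, sub_self]
  have hST : S = T := (Finset.eq_of_subset_of_card_le hTS (hTcard ▸ hScard)).symm
  -- each φ (X i) lies in the image of ψ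
  have hXi : ∀ i : Fin n, ∃ a : F, ψ a = φ (X i) := by
    intro i
    have : φ (X i) ∈ S := by
      rw [hS, Multiset.mem_toFinset, Polynomial.mem_roots hPne]
      simp only [hP, Polynomial.IsRoot, Polynomial.eval_sub, Polynomial.eval_pow,
        Polynomial.eval_X, hroot i, sub_self]
    rw [hST, hT, Finset.mem_image] at this
    obtain ⟨a, -, ha⟩ := this
    exact ⟨a, ha⟩
  choose b hb using hXi
  have hfactor : φ = ψ.comp (eval b : MvPolynomial (Fin n) F →+* F) := by
    apply MvPolynomial.ringHom_ext
    · intro a; simp [ψ]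
    · intro i; simp [hb i]
  have : b ∈ {b : Fin n → F | ∀ f ∈ J, (eval b) f = 0} := by
    intro f hf
    have hfm : φ f = 0 := (Ideal.Quotient.eq_zero_iff_mem).2 (hle (le_sup_left (α := Ideal (MvPolynomial (Fin n) F)) hf))
    rw [hfactor] at hfm
    have : ψ (eval b f) = 0 := hfm
    exact hψinj (by rw [this, map_zero])
  rw [hV] at this
  exact this
end

section
/- Let I = ⟨x_{m+1} - f_1, ..., x_n - f_{n-m}⟩ ⊆ J ⊆ R be ideals, ψ: R → R' the substitution homomorphism, and φ: K^m → K^n the map (a_1,...,a_m) ↦ (a_1,...,a_m, f_1(a), ..., f_{n-m}(a)) where K is the algebraic closure of F. Then V(J) = φ(V(J ∩ R')). -/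
open MvPolynomial

/-- With `I = ⟨x_{m+1} - f₁, …, xₙ - f_k⟩ ⊆ J ⊆ R = F[x₁,…,xₙ]`
(variables `Fin m ⊕ Fin k`), `K` the algebraic closure of `F`, and
`φ : Kᵐ → Kⁿ`, `a ↦ (a, f₁(a), …, f_k(a))`, one has `V(J) = φ(V(J ∩ R'))`,
where `J ∩ R'` is the elimination ideal. -/
theorem stmt9 (F : Type) [Field F] (m k : ℕ)
    (f : Fin k → MvPolynomial (Fin m) F)
    (J : Ideal (MvPolynomial (Fin m ⊕ Fin k) F))
    (hIJ : Ideal.span (Set.range fun j : Fin k =>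
        (X (Sum.inr j) : MvPolynomial (Fin m ⊕ Fin k) F) - rename Sum.inl (f j)) ≤ J)
    (φ : (Fin m → AlgebraicClosure F) → (Fin m ⊕ Fin k → AlgebraicClosure F))
    (hφ : φ = fun a => Sum.elim a (fun j => (aeval a) (f j))) :
    {v : Fin m ⊕ Fin k → AlgebraicClosure F | ∀ g ∈ J, (aeval v) g = 0}
      = φ '' {a : Fin m → AlgebraicClosure F |
          ∀ g ∈ Ideal.comap (rename (R := F) (Sum.inl : Fin m → Fin m ⊕ Fin k)).toRingHom J,
            (aeval a) g = 0} := by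
  subst hφ
  set I : Ideal (MvPolynomial (Fin m ⊕ Fin k) F) := Ideal.span (Set.range fun j : Fin k =>
        (X (Sum.inr j) : MvPolynomial (Fin m ⊕ Fin k) F) - rename Sum.inl (f j)) with hI
  set ψ : MvPolynomial (Fin m ⊕ Fin k) F →ₐ[F] MvPolynomial (Fin m) F :=
    aeval (Sum.elim X fun j => f j) with hψ
  have key : ∀ g, g - rename Sum.inl (ψ g) ∈ I := by
    have hcomp : (Ideal.Quotient.mkₐ F I).comp ((rename Sum.inl).comp ψ)
        = Ideal.Quotient.mkₐ F I := by
      apply MvPolynomial.algHom_ext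
      rintro (i | j)
      · simp [hψ]
      · simp only [AlgHom.comp_apply, hψ, aeval_X, Sum.elim_inr, Ideal.Quotient.mkₐ_eq_mk]
        rw [Ideal.Quotient.eq]
        have hgen : (X (Sum.inr j) : MvPolynomial (Fin m ⊕ Fin k) F)
            - rename Sum.inl (f j) ∈ I := Ideal.subset_span ⟨j, rfl⟩
        have := I.neg_mem hgen
        simpa [neg_sub] using this
    intro g
    have := AlgHom.congr_fun hcomp g
    simp only [AlgHom.comp_apply, Ideal.Quotient.mkₐ_eq_mk] at this
    exact (Ideal.Quotient.eq).mp this.symm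
  have haev : ∀ (a : Fin m → AlgebraicClosure F) (g : MvPolynomial (Fin m ⊕ Fin k) F),
      aeval (Sum.elim a fun j => aeval a (f j)) g = aeval a (ψ g) := by
    intro a g
    have hc : ((aeval a).comp ψ : MvPolynomial (Fin m ⊕ Fin k) F →ₐ[F] _)
        = aeval (Sum.elim a fun j => aeval a (f j)) := by
      apply MvPolynomial.algHom_ext
      rintro (i | j) <;> simp [hψ]
    exact (AlgHom.congr_fun hc g).symm
  ext v
  constructor
  · intro hv
    refine ⟨v ∘ Sum.inl, ?_, ?_⟩
    · intro g hg
      have := hv _ hg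
      rwa [AlgHom.toRingHom_eq_coe, RingHom.coe_coe, aeval_rename] at this
    · funext s
      rcases s with i | j
      · rfl
      · have h0 := hv _ (hIJ (Ideal.subset_span ⟨j, rfl⟩))
        simp only [map_sub, aeval_X, aeval_rename, sub_eq_zero] at h0
        simpa using h0.symm
  · rintro ⟨a, ha, rfl⟩ g hg
    rw [haev]
    apply ha
    have hmem : rename Sum.inl (ψ g) ∈ J := by
      have := J.sub_mem hg (hIJ (key g))
      simpa using this
    exact hmem
end

section
/- Given q ≥ 2 and a non-increasing p: {k',...,k''} → [0,1] with p(k'') = 0 and the convention p(k'-1) = 1, among all subsets {k_1 < ... < k_r} ⊆ {k',...,k''} with k_r = k'', the quantity C_2 = Σ_{i=1}^{r} (p(k_{i-1}) - p(k_i)) q^{k_i} (with k_0 = k'-1) is minimized by taking all steps, i.e., k_i = k' + i - 1 for i = 1,...,k''-k'+1. -/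
/-- Given `q ≥ 2` and a non-increasing `p` with values in `[0,1]`,
`p(k'') = 0` and the convention `p(k'-1) = 1`, among all chains of steps
`k' ≤ k₁ < … < k_r = k''`, the quantity
`C₂ = Σᵢ (p(k_{i-1}) - p(kᵢ)) q^{kᵢ}` (with `k₀ = k'-1`) is minimized by taking
all steps `k' , k'+1, …, k''`. -/
theorem stmt16 (q : ℝ) (hq : 2 ≤ q) (k' k'' : ℕ) (hk' : 1 ≤ k') (hkk : k' ≤ k'')
    (p : ℕ → ℝ) (hpa : Antitone p) (hp0 : ∀ i, 0 ≤ p i) (hp1 : ∀ i, p i ≤ 1)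
    (hpend : p k'' = 0) (hpstart : p (k' - 1) = 1)
    (r : ℕ) (hr : 1 ≤ r) (k : ℕ → ℕ) (hmono : StrictMonoOn k (Set.Iio r))
    (hlow : ∀ i < r, k' ≤ k i) (hhigh : ∀ i < r, k i ≤ k'') (hlast : k (r - 1) = k'') :
    (∑ i ∈ Finset.range (k'' - k' + 1), (p (k' + i - 1) - p (k' + i)) * q ^ (k' + i))
      ≤ ∑ i ∈ Finset.range r,
          (p (if i = 0 then k' - 1 else k (i - 1)) - p (k i)) * q ^ (k i) := by
  have hq1 : (1:ℝ) ≤ q := by linarith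
  set f : ℕ → ℝ := fun j => (p j - p (j+1)) * q^(j+1) with hf
  -- segment lemma
  have seg : ∀ a b : ℕ, a ≤ b → ∑ j ∈ Finset.Ico a b, f j ≤ (p a - p b) * q^b := by
    intro a b hab
    induction b, hab using Nat.le_induction with
    | base => simp
    | succ b hab ih =>
      rw [Finset.sum_Ico_succ_top hab]
      have h1 : (p a - p b) * q ^ b ≤ (p a - p b) * q ^ (b+1) := by
        apply mul_le_mul_of_nonneg_left (pow_le_pow_right₀ hq1 (by omega))
        have := hpa hab
        linarith
      have hfb : f b = (p b - p (b+1)) * q^(b+1) := rfl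
      have : (p b - p (b+1)) * q^(b+1) + (p a - p b) * q ^ (b+1)
          = (p a - p (b+1)) * q ^ (b+1) := by ring
      linarith [ih]
  -- chain lemma
  have chain : ∀ (n : ℕ) (g : ℕ → ℕ), (∀ i < n, g i ≤ g (i+1)) →
      ∑ j ∈ Finset.Ico (g 0) (g n), f j
        ≤ ∑ i ∈ Finset.range n, (p (g i) - p (g (i+1))) * q ^ (g (i+1)) := by
    intro n
    induction n with
    | zero => simp
    | succ t ih =>
      intro g hg
      have h0 : ∀ m, (∀ i < m, g i ≤ g (i+1)) → g 0 ≤ g m := by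
        intro m
        induction m with
        | zero => intro _; exact le_refl _
        | succ s ihs =>
          intro hm
          exact (ihs (fun i hi => hm i (by omega))).trans (hm s (by omega))
      have h0t : g 0 ≤ g t := h0 t (fun i hi => hg i (by omega))
      have htt : g t ≤ g (t+1) := hg t (by omega)
      rw [← Finset.sum_Ico_consecutive f h0t htt, Finset.sum_range_succ]
      have h1 := ih g (fun i hi => hg i (by omega))
      have h2 := seg (g t) (g (t+1)) htt
      linarith
  -- apply with explicit g
  set g : ℕ → ℕ := fun i => if i = 0 then k' - 1 else k (i-1) with hg
  have hgmono : ∀ i < r, g i ≤ g (i+1) := by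
    intro i hi
    simp only [hg]
    rcases Nat.eq_zero_or_pos i with h | h
    · subst h
      show (if (0:ℕ) = 0 then k' - 1 else k (0-1)) ≤ (if (1:ℕ) = 0 then k' - 1 else k (1-1))
      rw [if_pos rfl, if_neg (by omega)]
      show k' - 1 ≤ k 0
      have := hlow 0 (by omega)
      omega
    · rw [if_neg (by omega), if_neg (by omega)]
      have := hmono (Set.mem_Iio.mpr (show i-1 < r by omega))
        (Set.mem_Iio.mpr hi) (by omega)
      simp only [Nat.add_sub_cancel]
      omega
  have key := chain r g hgmono
  have hg0 : g 0 = k' - 1 := rfl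
  have hgr : g r = k'' := by
    simp only [hg]
    rw [if_neg (by omega)]
    exact hlast
  rw [hg0, hgr] at key
  have lhs_eq : (∑ i ∈ Finset.range (k'' - k' + 1), (p (k' + i - 1) - p (k' + i)) * q ^ (k' + i))
      = ∑ j ∈ Finset.Ico (k' - 1) k'', f j := by
    rw [Finset.sum_Ico_eq_sum_range]
    have hcard : k'' - (k' - 1) = k'' - k' + 1 := by omega
    rw [hcard]
    apply Finset.sum_congr rfl
    intro i _
    have e1 : k' - 1 + i = k' + i - 1 := by omega
    have e2 : k' - 1 + i + 1 = k' + i := by omega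
    simp only [hf, e1, e2, show k' + i - 1 + 1 = k' + i from by omega]
  have rhs_eq : ∑ i ∈ Finset.range r, (p (g i) - p (g (i+1))) * q ^ (g (i+1))
      = ∑ i ∈ Finset.range r,
          (p (if i = 0 then k' - 1 else k (i - 1)) - p (k i)) * q ^ (k i) := by
    apply Finset.sum_congr rfl
    intro i _
    have : g (i+1) = k i := by simp [hg]
    rw [this]
  rw [lhs_eq, ← rhs_eq]
  exact key
end

section
/- For the Trivium state transition endomorphism T̄ of the polynomial ring R̄ = GF(2)[x(0),...,x(92), y(0),...,y(83), z(0),...,z(110)], defined by x(i) ↦ x(i+1) for i < 92, x(92) ↦ z(0) + x(24) + z(45) + z(1)z(2), y(i) ↦ y(i+1) for i < 83, y(83) ↦ x(0) + y(6) + x(27) + x(1)x(2), z(i) ↦ z(i+1) for i < 110, z(110) ↦ y(0) + y(15) + z(24) + y(1)y(2), the endomorphism T̄ is an algebra automorphism, with inverse given by x(i) ↦ x(i-1) for i ≥ 1, x(0) ↦ y(5) + x(26) + y(83) + x(0)x(1), y(i) ↦ y(i-1) for i ≥ 1, y(0) ↦ y(14) + z(23) + z(110) + y(0)y(1), z(i)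 ↦ z(i-1) for i ≥ 1, z(0) ↦ x(23) + z(44) + x(92) + z(0)z(1). -/
open MvPolynomial

/-- The 288 Trivium state variables: `x(0..92)`, `y(0..83)`, `z(0..110)`. -/
abbrev TriviumVar := Fin 93 ⊕ Fin 84 ⊕ Fin 111

/-- The Trivium state ring `R̄ = GF(2)[x(0),…,x(92),y(0),…,y(83),z(0),…,z(110)]`. -/
abbrev TriviumRing := MvPolynomial TriviumVar (ZMod 2)

noncomputable def tx (i : Fin 93) : TriviumRing := X (Sum.inl i)
noncomputable def ty (i : Fin 84) : TriviumRing := X (Sum.inr (Sum.inl i))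
noncomputable def tz (i : Fin 111) : TriviumRing := X (Sum.inr (Sum.inr i))

/-- Images of the variables under the Trivium state transition endomorphism `T̄`. -/
noncomputable def triviumFwd : TriviumVar → TriviumRing
  | Sum.inl i =>
      if h : (i : ℕ) < 92 then tx ⟨i + 1, by omega⟩
      else tz 0 + tx 24 + tz 45 + tz 1 * tz 2
  | Sum.inr (Sum.inl i) =>
      if h : (i : ℕ) < 83 then ty ⟨i + 1, by omega⟩
      else tx 0 + ty 6 + tx 27 + tx 1 * tx 2
  | Sum.inr (Sum.inr i) =>
      if h : (i : ℕ) < 110 then tz ⟨i + 1, by omega⟩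
      else ty 0 + ty 15 + tz 24 + ty 1 * ty 2

/-- Images of the variables under the claimed inverse of `T̄`. -/
noncomputable def triviumBwd : TriviumVar → TriviumRing
  | Sum.inl i =>
      if h : 1 ≤ (i : ℕ) then tx ⟨i - 1, by omega⟩
      else ty 5 + tx 26 + ty 83 + tx 0 * tx 1
  | Sum.inr (Sum.inl i) =>
      if h : 1 ≤ (i : ℕ) then ty ⟨i - 1, by omega⟩
      else ty 14 + tz 23 + tz 110 + ty 0 * ty 1
  | Sum.inr (Sum.inr i) =>
      if h : 1 ≤ (i : ℕ) then tz ⟨i - 1, by omega⟩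
      else tx 23 + tz 44 + tx 92 + tz 0 * tz 1


private lemma two_self (p : TriviumRing) : p + p = 0 := by
  rw [← two_smul (ZMod 2) p, show (2 : ZMod 2) = 0 from rfl, zero_smul]

private lemma key1 (a b c d : TriviumRing) : (a + b + c + d) + a + b + d = c := by
  linear_combination two_self a + two_self b + two_self d

private lemma key2 (a b c d : TriviumRing) : a + b + (c + a + b + d) + d = c := by
  linear_combination two_self a + two_self b + two_self d

private lemma abX (i j : Fin 93) (h1 : 1 ≤ (i : ℕ)) (h : (i : ℕ) - 1 = (j : ℕ)) :
    aeval triviumBwd (tx i) = tx j := by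
  simp only [tx, aeval_X]
  simp only [triviumBwd, dif_pos h1]
  exact congrArg X (congrArg Sum.inl (Fin.ext h))

private lemma abY (i j : Fin 84) (h1 : 1 ≤ (i : ℕ)) (h : (i : ℕ) - 1 = (j : ℕ)) :
    aeval triviumBwd (ty i) = ty j := by
  simp only [ty, aeval_X]
  simp only [triviumBwd, dif_pos h1]
  exact congrArg X (congrArg _ (congrArg Sum.inl (Fin.ext h)))

private lemma abZ (i j : Fin 111) (h1 : 1 ≤ (i : ℕ)) (h : (i : ℕ) - 1 = (j : ℕ)) :
    aeval triviumBwd (tz i) = tz j := by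
  simp only [tz, aeval_X]
  simp only [triviumBwd, dif_pos h1]
  exact congrArg X (congrArg _ (congrArg Sum.inr (Fin.ext h)))

private lemma abX0 : aeval triviumBwd (tx 0) = ty 5 + tx 26 + ty 83 + tx 0 * tx 1 := by
  simp only [tx, aeval_X]
  simp only [triviumBwd]
  rw [dif_neg (by decide)]
  rfl

private lemma abY0 : aeval triviumBwd (ty 0) = ty 14 + tz 23 + tz 110 + ty 0 * ty 1 := by
  simp only [ty, aeval_X]
  simp only [triviumBwd]
  rw [dif_neg (by decide)]
  rfl

private lemma abZ0 : aeval triviumBwd (tz 0) = tx 23 + tz 44 + tx 92 + tz 0 * tz 1 := by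
  simp only [tz, aeval_X]
  simp only [triviumBwd]
  rw [dif_neg (by decide)]
  rfl

private lemma afX (i j : Fin 93) (h1 : (i : ℕ) < 92) (h : (i : ℕ) + 1 = (j : ℕ)) :
    aeval triviumFwd (tx i) = tx j := by
  simp only [tx, aeval_X]
  simp only [triviumFwd, dif_pos h1]
  exact congrArg X (congrArg Sum.inl (Fin.ext h))

private lemma afY (i j : Fin 84) (h1 : (i : ℕ) < 83) (h : (i : ℕ) + 1 = (j : ℕ)) :
    aeval triviumFwd (ty i) = ty j := by
  simp only [ty, aeval_X]
  simp only [triviumFwd, dif_pos h1]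
  exact congrArg X (congrArg _ (congrArg Sum.inl (Fin.ext h)))

private lemma afZ (i j : Fin 111) (h1 : (i : ℕ) < 110) (h : (i : ℕ) + 1 = (j : ℕ)) :
    aeval triviumFwd (tz i) = tz j := by
  simp only [tz, aeval_X]
  simp only [triviumFwd, dif_pos h1]
  exact congrArg X (congrArg _ (congrArg Sum.inr (Fin.ext h)))

private lemma afX92 : aeval triviumFwd (tx 92) = tz 0 + tx 24 + tz 45 + tz 1 * tz 2 := by
  simp only [tx, aeval_X]
  simp only [triviumFwd]
  rw [dif_neg (by decide)]
  rfl

private lemma afY83 : aeval triviumFwd (ty 83) = tx 0 + ty 6 + tx 27 + tx 1 * tx 2 := by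
  simp only [ty, aeval_X]
  simp only [triviumFwd]
  rw [dif_neg (by decide)]
  rfl

private lemma afZ110 : aeval triviumFwd (tz 110) = ty 0 + ty 15 + tz 24 + ty 1 * ty 2 := by
  simp only [tz, aeval_X]
  simp only [triviumFwd]
  rw [dif_neg (by decide)]
  rfl

private lemma bwd_fwd (v : TriviumVar) : aeval triviumBwd (triviumFwd v) = X v := by
  rcases v with i | i | i <;> simp only [triviumFwd] <;> split_ifs with h
  · rw [abX ⟨(i : ℕ) + 1, by omega⟩ i (by show 1 ≤ (i : ℕ) + 1; omega)
      (by show (i : ℕ) + 1 - 1 = (i : ℕ); omega)]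
    rfl
  · have h92 : ((92 : Fin 93) : ℕ) = 92 := rfl
    obtain rfl : i = 92 := Fin.ext (by omega)
    rw [map_add, map_add, map_add, map_mul, abZ0, abX 24 23 (by decide) (by decide),
      abZ 45 44 (by decide) (by decide), abZ 1 0 (by decide) (by decide),
      abZ 2 1 (by decide) (by decide)]
    exact key1 _ _ _ _
  · rw [abY ⟨(i : ℕ) + 1, by omega⟩ i (by show 1 ≤ (i : ℕ) + 1; omega)
      (by show (i : ℕ) + 1 - 1 = (i : ℕ); omega)]
    rfl
  · have h83 : ((83 : Fin 84) : ℕ) = 83 := rfl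
    obtain rfl : i = 83 := Fin.ext (by omega)
    rw [map_add, map_add, map_add, map_mul, abX0, abY 6 5 (by decide) (by decide),
      abX 27 26 (by decide) (by decide), abX 1 0 (by decide) (by decide),
      abX 2 1 (by decide) (by decide)]
    exact key1 _ _ _ _
  · rw [abZ ⟨(i : ℕ) + 1, by omega⟩ i (by show 1 ≤ (i : ℕ) + 1; omega)
      (by show (i : ℕ) + 1 - 1 = (i : ℕ); omega)]
    rfl
  · have h110 : ((110 : Fin 111) : ℕ) = 110 := rfl
    obtain rfl : i = 110 := Fin.ext (by omega)
    rw [map_add, map_add, map_add, map_mul, abY0, abY 15 14 (by decide) (by decide),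
      abZ 24 23 (by decide) (by decide), abY 1 0 (by decide) (by decide),
      abY 2 1 (by decide) (by decide)]
    exact key1 _ _ _ _

private lemma fwd_bwd (v : TriviumVar) : aeval triviumFwd (triviumBwd v) = X v := by
  rcases v with i | i | i <;> simp only [triviumBwd] <;> split_ifs with h
  · rw [afX ⟨(i : ℕ) - 1, by omega⟩ i (by show (i : ℕ) - 1 < 92; omega)
      (by show (i : ℕ) - 1 + 1 = (i : ℕ); omega)]
    rfl
  · have h0 : ((0 : Fin 93) : ℕ) = 0 := rfl
    obtain rfl : i = 0 := Fin.ext (by omega)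
    rw [map_add, map_add, map_add, map_mul, afY 5 6 (by decide) (by decide),
      afX 26 27 (by decide) (by decide), afY83, afX 0 1 (by decide) (by decide),
      afX 1 2 (by decide) (by decide)]
    exact key2 _ _ _ _
  · rw [afY ⟨(i : ℕ) - 1, by omega⟩ i (by show (i : ℕ) - 1 < 83; omega)
      (by show (i : ℕ) - 1 + 1 = (i : ℕ); omega)]
    rfl
  · have h0 : ((0 : Fin 84) : ℕ) = 0 := rfl
    obtain rfl : i = 0 := Fin.ext (by omega)
    rw [map_add, map_add, map_add, map_mul, afY 14 15 (by decide) (by decide),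
      afZ 23 24 (by decide) (by decide), afZ110, afY 0 1 (by decide) (by decide),
      afY 1 2 (by decide) (by decide)]
    exact key2 _ _ _ _
  · rw [afZ ⟨(i : ℕ) - 1, by omega⟩ i (by show (i : ℕ) - 1 < 110; omega)
      (by show (i : ℕ) - 1 + 1 = (i : ℕ); omega)]
    rfl
  · have h0 : ((0 : Fin 111) : ℕ) = 0 := rfl
    obtain rfl : i = 0 := Fin.ext (by omega)
    rw [map_add, map_add, map_add, map_mul, afX 23 24 (by decide) (by decide),
      afZ 44 45 (by decide) (by decide), afX92, afZ 0 1 (by decide) (by decide),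
      afZ 1 2 (by decide) (by decide)]
    exact key2 _ _ _ _

/-- The Trivium state transition endomorphism `T̄` is an algebra
automorphism of `R̄`, the given endomorphism `triviumBwd` being its two-sided
inverse. -/
theorem stmt17 :
    (aeval triviumFwd).comp (aeval triviumBwd) = AlgHom.id (ZMod 2) TriviumRing ∧
    (aeval triviumBwd).comp (aeval triviumFwd) = AlgHom.id (ZMod 2) TriviumRing ∧
    Function.Bijective (aeval (R := ZMod 2) triviumFwd) := by
  have h1 : (aeval triviumFwd).comp (aeval triviumBwd) = AlgHom.id (ZMod 2) TriviumRing := by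
    apply MvPolynomial.algHom_ext
    intro v
    simp only [AlgHom.comp_apply, aeval_X, AlgHom.id_apply]
    exact fwd_bwd v
  have h2 : (aeval triviumBwd).comp (aeval triviumFwd) = AlgHom.id (ZMod 2) TriviumRing := by
    apply MvPolynomial.algHom_ext
    intro v
    simp only [AlgHom.comp_apply, aeval_X, AlgHom.id_apply]
    exact bwd_fwd v
  refine ⟨h1, h2, ?_⟩
  rw [Function.bijective_iff_has_inverse]
  refine ⟨aeval triviumBwd, fun p => ?_, fun p => ?_⟩
  · simpa using AlgHom.congr_fun h2 p
  · simpa using AlgHom.congr_fun h1 p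
end
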